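/- Let O be a (strict) monoidal category and (L, τ) a base algebra in O, i.e. a commutative algebra in the Drinfeld center of O. Define the category Ō_L with the same objects as O, Hom_{Ō_L}(A, B) := Hom_O(A, B ⊗ L), composition of φ : A → B ⊗ L and ψ : B → C ⊗ L given by (id_C ⊗ m_L) ∘ (ψ ⊗ id_L) ∘ φ, and tensor product on morphisms given by φ ⊗̄ ψ := (id ⊗ m_L) ∘ (id ⊗ τ_D ⊗ id) ∘ (φ ⊗ ψ). Then Ō_L is a monoidal category containing O as a monoidal subcategory. -/

import Mathlib

/-!
STATEMENT 4: Let `O` be a monoidal category and `(L, τ)` a base algebra in `O`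
(a commutative algebra in the Drinfeld center).  The dynamical extension `Ō_L` has the
same objects as `O`, morphisms `Hom(A,B) := Hom_O(A, B ⊗ L)`, composition via the
multiplication of `L`, and tensor product of morphisms via the permutations `τ`.
Then `Ō_L` is a monoidal category containing `O` as a monoidal subcategory:
the composition `dcomp` is associative and unital, the tensor product `dtensor` is
unital, functorial (interchange) and associative, and the natural inclusion of `O`
respects identities, composition and tensor products.
-/

open CategoryTheory MonoidalCategory

universe v u

variable {C : Type u} [Category.{v} C] [MonoidalCategory C]

/-- A base algebra in a monoidal category: an algebra `(L, mul, one)` with a family of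
central-structure isomorphisms `τ_A : L ⊗ A ⟶ A ⊗ L`, natural, multiplicative in `A`,
compatible with `mul`, and with `τ`-commutative multiplication. -/
structure BaseAlgebraIn (C : Type u) [Category.{v} C] [MonoidalCategory C] where
  L : C
  mul : L ⊗ L ⟶ L
  one : 𝟙_ C ⟶ L
  mul_assoc : (mul ▷ L) ≫ mul = (α_ L L L).hom ≫ (L ◁ mul) ≫ mul
  one_mul : (one ▷ L) ≫ mul = (λ_ L).hom
  mul_one : (L ◁ one) ≫ mul = (ρ_ L).hom
  τ : ∀ A : C, L ⊗ A ⟶ A ⊗ L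
  τ_iso : ∀ A : C, IsIso (τ A)
  τ_natural : ∀ {A B : C} (ψ : B ⟶ A), (L ◁ ψ) ≫ τ A = τ B ≫ (ψ ▷ L)
  τ_tensor : ∀ A B : C,
    τ (A ⊗ B) = (α_ L A B).inv ≫ (τ A ▷ B) ≫ (α_ A L B).hom ≫ (A ◁ τ B) ≫ (α_ A B L).inv
  τ_mul : ∀ A : C,
    (mul ▷ A) ≫ τ A
      = (α_ L L A).hom ≫ (L ◁ τ A) ≫ (α_ L A L).inv ≫ (τ A ▷ L) ≫ (α_ A L L).hom ≫
          (A ◁ mul)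
  τ_comm : τ L ≫ mul = mul

namespace BaseAlgebraIn

variable (S : BaseAlgebraIn C)

/-- Composition of morphisms in the dynamical extension `Ō_L`. -/
def dcomp {A B D : C} (φ : A ⟶ B ⊗ S.L) (ψ : B ⟶ D ⊗ S.L) : A ⟶ D ⊗ S.L :=
  φ ≫ (ψ ▷ S.L) ≫ (α_ D S.L S.L).hom ≫ (D ◁ S.mul)

/-- The identity morphism of `Ō_L`. -/
def did (A : C) : A ⟶ A ⊗ S.L := (ρ_ A).inv ≫ (A ◁ S.one)

/-- Tensor product of morphisms in the dynamical extension `Ō_L`. -/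
def dtensor {A B A' B' : C} (φ : A ⟶ A' ⊗ S.L) (ψ : B ⟶ B' ⊗ S.L) :
    A ⊗ B ⟶ (A' ⊗ B') ⊗ S.L :=
  (φ ⊗ₘ ψ) ≫ (α_ A' S.L (B' ⊗ S.L)).hom ≫
    (A' ◁ ((α_ S.L B' S.L).inv ≫ ((S.τ B') ▷ S.L) ≫ (α_ B' S.L S.L).hom ≫
      (B' ◁ S.mul))) ≫ (α_ A' B' S.L).inv

/-- The inclusion of `O` into `Ō_L` on morphisms. -/
def incl {A B : C} (f : A ⟶ B) : A ⟶ B ⊗ S.L := f ≫ (ρ_ B).inv ≫ (B ◁ S.one)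

end BaseAlgebraIn

/-!
`Ō_L` is the Kleisli category of the monad `- ⊗ L`, so composition is unital and associative
by the algebra axioms alone. The tensor product factors in two ways,
`φ ⊗̄ ψ = (φ ⊗̄ 1) ∘̄ (1 ⊗̄ ψ) = (1 ⊗̄ ψ) ∘̄ (φ ⊗̄ 1)`, where `1 ⊗̄ ψ` is `A ◁ ψ` and `φ ⊗̄ 1` is
`φ ▷ B` followed by `τ_B`; the first factorization is naturality of `τ` with respect to
morphisms of `Ō_L`, which is where commutativity of `L` is needed. Both one-sided tensor
products are functorial (for `φ ⊗̄ 1` this is `τ_mul`), and the two factorizations let the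
factors of `(φ ⊗̄ ψ) ∘̄ (φ' ⊗̄ ψ')` be reordered, which gives the interchange law. By
interchange, both sides of the associativity law are functorial in the triple `(φ, ψ, χ)`, so
it suffices to check it when two of the three morphisms are identities; there it reduces to
`τ_tensor` and coherence.
-/

namespace BaseAlgebraIn

variable (S : BaseAlgebraIn C)

lemma did_dcomp {A B : C} (φ : A ⟶ B ⊗ S.L) : S.dcomp (S.did A) φ = φ := by
  calc S.dcomp (S.did A) φ
      = φ ≫ (ρ_ (B ⊗ S.L)).inv ≫ ((B ⊗ S.L) ◁ S.one) ≫ (α_ B S.L S.L).hom ≫ (B ◁ S.mul) := by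
        simp only [dcomp, did, Category.assoc, whisker_exchange_assoc]
        simp
    _ = φ ≫ (B ◁ ((ρ_ S.L).inv ≫ (S.L ◁ S.one) ≫ S.mul)) := by monoidal
    _ = φ := by rw [S.mul_one]; simp

lemma dcomp_did {A B : C} (φ : A ⟶ B ⊗ S.L) : S.dcomp φ (S.did B) = φ := by
  calc S.dcomp φ (S.did B) = φ ≫ (B ◁ ((λ_ S.L).inv ≫ (S.one ▷ S.L) ≫ S.mul)) := by
        rw [dcomp, did]; monoidal
    _ = φ := by rw [S.one_mul]; simp

lemma dcomp_assoc {A B D E : C} (φ : A ⟶ B ⊗ S.L) (ψ : B ⟶ D ⊗ S.L) (χ : D ⟶ E ⊗ S.L) :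
    S.dcomp (S.dcomp φ ψ) χ = S.dcomp φ (S.dcomp ψ χ) := by
  have mul_assoc' : (α_ (E ⊗ S.L) S.L S.L).hom ≫ ((E ⊗ S.L) ◁ S.mul) ≫
        (α_ E S.L S.L).hom ≫ (E ◁ S.mul)
      = ((α_ E S.L S.L).hom ▷ S.L) ≫ ((E ◁ S.mul) ▷ S.L) ≫ (α_ E S.L S.L).hom ≫
        (E ◁ S.mul) := by
    rw [associator_naturality_right_assoc, associator_naturality_middle_assoc,
      ← whiskerLeft_comp, ← whiskerLeft_comp, S.mul_assoc]
    monoidal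
  simp only [dcomp, comp_whiskerRight, Category.assoc]
  rw [whisker_exchange_assoc, ← associator_naturality_left_assoc, mul_assoc']

lemma comp_dcomp {A₀ A B D : C} (w : A₀ ⟶ A) (φ : A ⟶ B ⊗ S.L) (ψ : B ⟶ D ⊗ S.L) :
    S.dcomp (w ≫ φ) ψ = w ≫ S.dcomp φ ψ := by
  simp [dcomp]

lemma comp_whiskerRight_dcomp {A P Q D : C} (φ : A ⟶ P ⊗ S.L) (w : P ⟶ Q)
    (ψ : Q ⟶ D ⊗ S.L) : S.dcomp (φ ≫ (w ▷ S.L)) ψ = S.dcomp φ (w ≫ ψ) := by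
  simp [dcomp]

lemma dcomp_comp_whiskerRight {A B D D' : C} (φ : A ⟶ B ⊗ S.L) (ψ : B ⟶ D ⊗ S.L)
    (w : D ⟶ D') : S.dcomp φ (ψ ≫ (w ▷ S.L)) = S.dcomp φ ψ ≫ (w ▷ S.L) := by
  simp only [dcomp, comp_whiskerRight, Category.assoc]
  rw [associator_naturality_left_assoc, whisker_exchange]

lemma incl_eq_comp_did {A B : C} (f : A ⟶ B) : S.incl f = f ≫ S.did B := rfl

lemma incl_id (A : C) : S.incl (𝟙 A) = S.did A := by
  simp [incl_eq_comp_did]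

lemma incl_comp {A B D : C} (f : A ⟶ B) (g : B ⟶ D) :
    S.incl (f ≫ g) = S.dcomp (S.incl f) (S.incl g) := by
  simp only [incl_eq_comp_did, comp_dcomp, did_dcomp, Category.assoc]

/-- The left action of `L` on the free right `L`-module `B ⊗ L`, through `τ`. -/
def act (B : C) : S.L ⊗ (B ⊗ S.L) ⟶ B ⊗ S.L :=
  (α_ S.L B S.L).inv ≫ (S.τ B ▷ S.L) ≫ (α_ B S.L S.L).hom ≫ (B ◁ S.mul)

lemma dtensor_eq {A B A' B' : C} (φ : A ⟶ A' ⊗ S.L) (ψ : B ⟶ B' ⊗ S.L) :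
    S.dtensor φ ψ = (φ ⊗ₘ ψ) ≫ (α_ A' S.L (B' ⊗ S.L)).hom ≫ (A' ◁ S.act B') ≫
      (α_ A' B' S.L).inv := rfl

lemma mul_whiskerRight_τ (A : C) :
    (S.mul ▷ A) ≫ S.τ A = (α_ S.L S.L A).hom ≫ (S.L ◁ S.τ A) ≫ S.act A := by
  simp [act, S.τ_mul]

-- `τ_A` is invertible, so this unit law can be read off `τ_mul` precomposed with `one ▷ L ▷ A`.
lemma one_whiskerRight_act (A : C) : (S.one ▷ (A ⊗ S.L)) ≫ S.act A = (λ_ (A ⊗ S.L)).hom := by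
  have := S.τ_iso A
  rw [← cancel_epi ((α_ (𝟙_ C) S.L A).hom ≫ (𝟙_ C ◁ S.τ A))]
  calc ((α_ (𝟙_ C) S.L A).hom ≫ (𝟙_ C ◁ S.τ A)) ≫ (S.one ▷ (A ⊗ S.L)) ≫ S.act A
      = (α_ (𝟙_ C) S.L A).hom ≫ (S.one ▷ (S.L ⊗ A)) ≫ (S.L ◁ S.τ A) ≫ S.act A := by
        rw [Category.assoc, ← whisker_exchange_assoc]
    _ = ((S.one ▷ S.L) ▷ A) ≫ (S.mul ▷ A) ≫ S.τ A := by
        rw [mul_whiskerRight_τ, associator_naturality_left_assoc]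
    _ = ((λ_ S.L).hom ▷ A) ≫ S.τ A := by rw [← comp_whiskerRight_assoc, S.one_mul]
    _ = ((α_ (𝟙_ C) S.L A).hom ≫ (𝟙_ C ◁ S.τ A)) ≫ (λ_ (A ⊗ S.L)).hom := by simp

lemma whiskerLeft_did_act (B : C) : (S.L ◁ S.did B) ≫ S.act B = S.τ B := by
  calc (S.L ◁ S.did B) ≫ S.act B
      = (S.L ◁ (ρ_ B).inv) ≫ (α_ S.L B (𝟙_ C)).inv ≫
          (((S.L ⊗ B) ◁ S.one) ≫ (S.τ B ▷ S.L)) ≫ (α_ B S.L S.L).hom ≫ (B ◁ S.mul) := by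
        rw [did, act]; monoidal
    _ = (S.L ◁ (ρ_ B).inv) ≫ (α_ S.L B (𝟙_ C)).inv ≫ (S.τ B ▷ 𝟙_ C) ≫
          ((B ⊗ S.L) ◁ S.one) ≫ (α_ B S.L S.L).hom ≫ (B ◁ S.mul) := by
        rw [whisker_exchange, Category.assoc]
    _ = (S.L ◁ (ρ_ B).inv) ≫ (α_ S.L B (𝟙_ C)).inv ≫ (S.τ B ▷ 𝟙_ C) ≫
          (α_ B S.L (𝟙_ C)).hom ≫ (B ◁ ((S.L ◁ S.one) ≫ S.mul)) := by monoidal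
    _ = S.τ B := by rw [S.mul_one]; simp

/-- Naturality of `τ` extends from morphisms of `O` to morphisms of `Ō_L`; this is where
the commutativity of `L` enters. -/
lemma whiskerLeft_act {B B' : C} (ψ : B ⟶ B' ⊗ S.L) :
    (S.L ◁ ψ) ≫ S.act B' = S.dcomp (S.τ B) ψ := by
  calc (S.L ◁ ψ) ≫ S.act B'
      = (S.L ◁ ψ) ≫ (α_ S.L B' S.L).inv ≫ (S.τ B' ▷ S.L) ≫ (α_ B' S.L S.L).hom ≫
          (B' ◁ (S.τ S.L ≫ S.mul)) := by
        rw [S.τ_comm, act]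
    _ = (S.L ◁ ψ) ≫ S.τ (B' ⊗ S.L) ≫ (α_ B' S.L S.L).hom ≫ (B' ◁ S.mul) := by
        rw [S.τ_tensor]; simp
    _ = S.dcomp (S.τ B) ψ := by rw [reassoc_of% (S.τ_natural ψ), dcomp]

lemma did_dtensor {A B B' : C} (ψ : B ⟶ B' ⊗ S.L) :
    S.dtensor (S.did A) ψ = (A ◁ ψ) ≫ (α_ A B' S.L).inv := by
  calc S.dtensor (S.did A) ψ
      = (A ◁ ψ) ≫ ((ρ_ A).inv ▷ (B' ⊗ S.L)) ≫ (α_ A (𝟙_ C) (B' ⊗ S.L)).hom ≫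
          (A ◁ ((S.one ▷ (B' ⊗ S.L)) ≫ S.act B')) ≫ (α_ A B' S.L).inv := by
        rw [dtensor_eq, did, tensorHom_def']; monoidal
    _ = (A ◁ ψ) ≫ (α_ A B' S.L).inv := by rw [one_whiskerRight_act]; monoidal

lemma dtensor_did {A A' B : C} (φ : A ⟶ A' ⊗ S.L) :
    S.dtensor φ (S.did B) = (φ ▷ B) ≫ (α_ A' S.L B).hom ≫ (A' ◁ S.τ B) ≫ (α_ A' B S.L).inv := by
  calc S.dtensor φ (S.did B)
      = (φ ▷ B) ≫ (α_ A' S.L B).hom ≫ (A' ◁ ((S.L ◁ S.did B) ≫ S.act B)) ≫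
          (α_ A' B S.L).inv := by
        rw [dtensor_eq, MonoidalCategory.tensorHom_def]; monoidal
    _ = _ := by rw [whiskerLeft_did_act]

lemma did_dtensor_did (A B : C) : S.dtensor (S.did A) (S.did B) = S.did (A ⊗ B) := by
  rw [did_dtensor, did, did]
  monoidal

lemma comp_dtensor_comp {A B A' B' X Y : C} (f : X ⟶ A) (g : Y ⟶ B)
    (φ : A ⟶ A' ⊗ S.L) (ψ : B ⟶ B' ⊗ S.L) :
    S.dtensor (f ≫ φ) (g ≫ ψ) = (f ⊗ₘ g) ≫ S.dtensor φ ψ := by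
  rw [dtensor_eq, dtensor_eq, ← tensorHom_comp_tensorHom, Category.assoc]

lemma incl_tensor {A B A' B' : C} (f : A ⟶ A') (g : B ⟶ B') :
    S.incl (f ⊗ₘ g) = S.dtensor (S.incl f) (S.incl g) := by
  simp only [incl_eq_comp_did, comp_dtensor_comp, did_dtensor_did]

lemma dcomp_dtensor_did_did_dtensor {A B A' B' : C} (φ : A ⟶ A' ⊗ S.L)
    (ψ : B ⟶ B' ⊗ S.L) :
    S.dcomp (S.dtensor φ (S.did B)) (S.dtensor (S.did A') ψ) = S.dtensor φ ψ := by
  calc S.dcomp (S.dtensor φ (S.did B)) (S.dtensor (S.did A') ψ)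
      = (φ ▷ B) ≫ (α_ A' S.L B).hom ≫ (A' ◁ S.dcomp (S.τ B) ψ) ≫ (α_ A' B' S.L).inv := by
        rw [dtensor_did, did_dtensor, dcomp, dcomp]; monoidal
    _ = (φ ▷ B) ≫ (α_ A' S.L B).hom ≫ (A' ◁ ((S.L ◁ ψ) ≫ S.act B')) ≫
          (α_ A' B' S.L).inv := by rw [whiskerLeft_act]
    _ = S.dtensor φ ψ := by rw [dtensor_eq, MonoidalCategory.tensorHom_def]; monoidal

lemma dcomp_did_dtensor_dtensor_did {A B A' B' : C} (φ : A ⟶ A' ⊗ S.L)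
    (ψ : B ⟶ B' ⊗ S.L) :
    S.dcomp (S.dtensor (S.did A) ψ) (S.dtensor φ (S.did B')) = S.dtensor φ ψ := by
  rw [did_dtensor, dtensor_did, dtensor_eq, tensorHom_def', dcomp, act]
  monoidal

lemma did_dtensor_dcomp {A B B' B'' : C} (ψ : B ⟶ B' ⊗ S.L) (ψ' : B' ⟶ B'' ⊗ S.L) :
    S.dtensor (S.did A) (S.dcomp ψ ψ')
      = S.dcomp (S.dtensor (S.did A) ψ) (S.dtensor (S.did A) ψ') := by
  rw [did_dtensor, did_dtensor, did_dtensor, dcomp, dcomp]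
  monoidal

lemma dcomp_dtensor_did {A A' A'' B : C} (φ : A ⟶ A' ⊗ S.L) (φ' : A' ⟶ A'' ⊗ S.L) :
    S.dtensor (S.dcomp φ φ') (S.did B)
      = S.dcomp (S.dtensor φ (S.did B)) (S.dtensor φ' (S.did B)) := by
  calc S.dtensor (S.dcomp φ φ') (S.did B)
      = (φ ▷ B) ≫ (α_ A' S.L B).hom ≫ (φ' ▷ (S.L ⊗ B)) ≫ (α_ A'' S.L (S.L ⊗ B)).hom ≫
          (A'' ◁ ((α_ S.L S.L B).inv ≫ (S.mul ▷ B) ≫ S.τ B)) ≫ (α_ A'' B S.L).inv := by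
        rw [dtensor_did, dcomp]; monoidal
    _ = (φ ▷ B) ≫ (α_ A' S.L B).hom ≫ ((A' ◁ S.τ B) ≫ (φ' ▷ (B ⊗ S.L))) ≫
          (α_ A'' S.L (B ⊗ S.L)).hom ≫ (A'' ◁ S.act B) ≫ (α_ A'' B S.L).inv := by
        rw [mul_whiskerRight_τ, Iso.inv_hom_id_assoc, whisker_exchange]; monoidal
    _ = _ := by rw [dtensor_did, dtensor_did, dcomp, act]; monoidal

lemma dcomp_dtensor_dtensor {A B A' B' A'' B'' : C} (φ : A ⟶ A' ⊗ S.L) (ψ : B ⟶ B' ⊗ S.L)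
    (φ' : A' ⟶ A'' ⊗ S.L) (ψ' : B' ⟶ B'' ⊗ S.L) :
    S.dcomp (S.dtensor φ ψ) (S.dtensor φ' ψ') = S.dtensor (S.dcomp φ φ') (S.dcomp ψ ψ') := by
  calc S.dcomp (S.dtensor φ ψ) (S.dtensor φ' ψ')
      = S.dcomp (S.dtensor φ (S.did B))
          (S.dcomp (S.dcomp (S.dtensor (S.did A') ψ) (S.dtensor φ' (S.did B')))
            (S.dtensor (S.did A'') ψ')) := by
        rw [← S.dcomp_dtensor_did_did_dtensor φ, ← S.dcomp_dtensor_did_did_dtensor φ',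
          dcomp_assoc, dcomp_assoc]
    _ = S.dcomp (S.dcomp (S.dtensor φ (S.did B)) (S.dtensor φ' (S.did B)))
          (S.dcomp (S.dtensor (S.did A'') ψ) (S.dtensor (S.did A'') ψ')) := by
        rw [dcomp_did_dtensor_dtensor_did, ← S.dcomp_dtensor_did_did_dtensor φ' ψ]
        simp only [dcomp_assoc]
    _ = S.dtensor (S.dcomp φ φ') (S.dcomp ψ ψ') := by
        rw [← dcomp_dtensor_did, ← did_dtensor_dcomp, dcomp_dtensor_did_did_dtensor]

def DTensorAssoc {A B D A' B' D' : C} (φ : A ⟶ A' ⊗ S.L) (ψ : B ⟶ B' ⊗ S.L)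
    (χ : D ⟶ D' ⊗ S.L) : Prop :=
  (α_ A B D).inv ≫ S.dtensor (S.dtensor φ ψ) χ ≫ ((α_ A' B' D').hom ▷ S.L)
    = S.dtensor φ (S.dtensor ψ χ)

variable {S} in
lemma DTensorAssoc.dcomp {A B D A' B' D' A'' B'' D'' : C}
    {φ : A ⟶ A' ⊗ S.L} {ψ : B ⟶ B' ⊗ S.L} {χ : D ⟶ D' ⊗ S.L}
    {φ' : A' ⟶ A'' ⊗ S.L} {ψ' : B' ⟶ B'' ⊗ S.L} {χ' : D' ⟶ D'' ⊗ S.L}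
    (h : S.DTensorAssoc φ ψ χ) (h' : S.DTensorAssoc φ' ψ' χ') :
    S.DTensorAssoc (S.dcomp φ φ') (S.dcomp ψ ψ') (S.dcomp χ χ') := by
  unfold DTensorAssoc at *
  rw [← dcomp_dtensor_dtensor, ← dcomp_dtensor_dtensor, ← dcomp_dtensor_dtensor,
    ← dcomp_dtensor_dtensor, ← h, ← h', comp_dcomp, comp_whiskerRight_dcomp,
    Iso.hom_inv_id_assoc, dcomp_comp_whiskerRight]

lemma dtensorAssoc_left {A A' : C} (φ : A ⟶ A' ⊗ S.L) (B D : C) :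
    S.DTensorAssoc φ (S.did B) (S.did D) := by
  rw [DTensorAssoc, did_dtensor_did, dtensor_did, dtensor_did, dtensor_did, τ_tensor]
  monoidal

lemma dtensorAssoc_middle {B B' : C} (A D : C) (ψ : B ⟶ B' ⊗ S.L) :
    S.DTensorAssoc (S.did A) ψ (S.did D) := by
  rw [DTensorAssoc, did_dtensor, dtensor_did, dtensor_did, did_dtensor]
  monoidal

lemma dtensorAssoc_right {D D' : C} (A B : C) (χ : D ⟶ D' ⊗ S.L) :
    S.DTensorAssoc (S.did A) (S.did B) χ := by
  rw [DTensorAssoc, did_dtensor_did, did_dtensor, did_dtensor, did_dtensor]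
  monoidal

lemma dtensorAssoc {A B D A' B' D' : C} (φ : A ⟶ A' ⊗ S.L) (ψ : B ⟶ B' ⊗ S.L)
    (χ : D ⟶ D' ⊗ S.L) : S.DTensorAssoc φ ψ χ := by
  simpa only [did_dcomp, dcomp_did] using
    (S.dtensorAssoc_left φ B D).dcomp
      ((S.dtensorAssoc_middle A' D ψ).dcomp (S.dtensorAssoc_right A' B' χ))

end BaseAlgebraIn

theorem statement4 (S : BaseAlgebraIn C) :
    -- `Ō_L` is a category: composition is unital and associative
    (∀ {A B : C} (φ : A ⟶ B ⊗ S.L), S.dcomp (S.did A) φ = φ ∧ S.dcomp φ (S.did B) = φ) ∧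
    (∀ {A B D E : C} (φ : A ⟶ B ⊗ S.L) (ψ : B ⟶ D ⊗ S.L) (χ : D ⟶ E ⊗ S.L),
      S.dcomp (S.dcomp φ ψ) χ = S.dcomp φ (S.dcomp ψ χ)) ∧
    -- the tensor product is unital and functorial (interchange law)
    (∀ A B : C, S.dtensor (S.did A) (S.did B) = S.did (A ⊗ B)) ∧
    (∀ {A B A' B' A'' B'' : C} (φ : A ⟶ A' ⊗ S.L) (ψ : B ⟶ B' ⊗ S.L)
      (φ' : A' ⟶ A'' ⊗ S.L) (ψ' : B' ⟶ B'' ⊗ S.L),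
      S.dcomp (S.dtensor φ ψ) (S.dtensor φ' ψ')
        = S.dtensor (S.dcomp φ φ') (S.dcomp ψ ψ')) ∧
    -- the tensor product is associative (up to the associator of `O`)
    (∀ {A B D A' B' D' : C} (φ : A ⟶ A' ⊗ S.L) (ψ : B ⟶ B' ⊗ S.L) (χ : D ⟶ D' ⊗ S.L),
      (α_ A B D).inv ≫ S.dtensor (S.dtensor φ ψ) χ ≫ ((α_ A' B' D').hom ▷ S.L)
        = S.dtensor φ (S.dtensor ψ χ)) ∧
    -- `O` is a monoidal subcategory of `Ō_L`:
    (∀ A : C, S.incl (𝟙 A) = S.did A) ∧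
    (∀ {A B D : C} (f : A ⟶ B) (g : B ⟶ D), S.incl (f ≫ g) = S.dcomp (S.incl f) (S.incl g)) ∧
    (∀ {A B A' B' : C} (f : A ⟶ A') (g : B ⟶ B'),
      S.incl (f ⊗ₘ g) = S.dtensor (S.incl f) (S.incl g)) := by
  exact ⟨fun φ => ⟨S.did_dcomp φ, S.dcomp_did φ⟩, fun φ ψ χ => S.dcomp_assoc φ ψ χ,
    S.did_dtensor_did, fun φ ψ φ' ψ' => S.dcomp_dtensor_dtensor φ ψ φ' ψ',
    fun φ ψ χ => S.dtensorAssoc φ ψ χ, S.incl_id, fun f g => S.incl_comp f g,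
    fun f g => S.incl_tensor f g⟩
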